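/- The kernel K of the homomorphism P : Aut(X ⋏ Y) → Aut(X) equals the disjoint union over τ ∈ T of the products ∏_{x ∈ X} Aut(Y_x)_τ, where T is the image of Aut(Y) in the symmetric group on I_Y, and Aut(Y_x)_τ is the set of automorphisms of the fiber Y_x ≅ Y whose induced permutation of I_Y equals τ. Consequently there is an injective group homomorphism Aut(X ⋏ Y) ↪ Aut(Y) ≀_X Aut(X). -/

import Mathlib

open Matrix

/-- The `i`-th adjacency matrix of a relation map `R : X → X → I`. -/
def adjMat {X I : Type*} [DecidableEq I] (R : X → X → I) (i : I) : Matrix X X ℂ :=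
  fun x y => if R x y = i then 1 else 0

/-- An association scheme on a finite set `X` with relation set `I`:
a surjective relation map whose adjacency matrices contain the identity matrix,
are closed under transpose, and span a set closed under matrix multiplication. -/
structure AssocScheme (X I : Type*) [Fintype X] [Fintype I] [DecidableEq X] [DecidableEq I] where
  R : X → X → I
  surj : Function.Surjective fun p : X × X => R p.1 p.2
  i0 : I
  ident : ∀ x y, R x y = i0 ↔ x = y
  symm : ∀ i : I, ∃ i' : I, ∀ x y, R x y = i ↔ R y x = i'
  closed : ∀ i j : I, ∃ c : I → ℂ,
    adjMat R i * adjMat R j = ∑ k : I, c k • adjMat R k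

/-- The relation map of the wreath product `X ⋏ Y`: compare the `X`-components first;
if they are equal, use the relation of the `Y`-components. -/
def wreathR {X Y IX IY : Type*} [DecidableEq IX]
    (RX : X → X → IX) (i0X : IX) (RY : Y → Y → IY) :
    X × Y → X × Y → ({i : IX // i ≠ i0X} ⊕ IY) :=
  fun p q => if h : RX p.1 q.1 = i0X then Sum.inr (RY p.2 q.2)
    else Sum.inl ⟨RX p.1 q.1, h⟩

/-- The automorphism group of an association scheme with relation map `R`, as a
subgroup of `Perm Z × Perm K`: pairs `(f, τ)` with `R (f x) (f y) = τ (R x y)`. -/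
def autGroup {Z K : Type*} (R : Z → Z → K) : Subgroup (Equiv.Perm Z × Equiv.Perm K) where
  carrier := {p | ∀ x y, R (p.1 x) (p.1 y) = p.2 (R x y)}
  one_mem' := by intro x y; rfl
  mul_mem' := by
    intro a b ha hb x y
    have h1 : (a * b).1 x = a.1 (b.1 x) := rfl
    have h2 : (a * b).1 y = a.1 (b.1 y) := rfl
    rw [h1, h2, ha, hb]; rfl
  inv_mem' := by
    intro a ha x y
    have := ha (a.1⁻¹ x) (a.1⁻¹ y)
    simp only [Equiv.Perm.coe_inv, Equiv.apply_symm_apply] at this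
    have h2 : (a⁻¹).2 (R x y) = a.2⁻¹ (R x y) := rfl
    rw [h2, this]
    simp

section WreathAux

variable {X Y IX IY : Type*}
    [Fintype X] [Fintype Y] [Fintype IX] [Fintype IY]
    [DecidableEq X] [DecidableEq Y] [DecidableEq IX] [DecidableEq IY]
    {SX : AssocScheme X IX} {SY : AssocScheme Y IY}

theorem wa_nonemptyX (SX : AssocScheme X IX) : Nonempty X := ⟨((SX.surj SX.i0).choose).1⟩
theorem wa_nonemptyY (SY : AssocScheme Y IY) : Nonempty Y := ⟨((SY.surj SY.i0).choose).1⟩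

theorem wa_mem (w : autGroup (wreathR SX.R SX.i0 SY.R)) :
    ∀ p q, wreathR SX.R SX.i0 SY.R (w.val.1 p) (w.val.1 q) =
      w.val.2 (wreathR SX.R SX.i0 SY.R p q) := w.prop

theorem wa_memX (g : autGroup SX.R) :
    ∀ x y, SX.R (g.val.1 x) (g.val.1 y) = g.val.2 (SX.R x y) := g.prop

variable {P : autGroup (wreathR SX.R SX.i0 SY.R) →* autGroup SX.R}
    (hP : ∀ w : autGroup (wreathR SX.R SX.i0 SY.R), ∀ x : X, ∀ y : Y,
      (P w : Equiv.Perm X × Equiv.Perm IX).1 x =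
        ((w : Equiv.Perm (X × Y) × Equiv.Perm ({i : IX // i ≠ SX.i0} ⊕ IY)).1 (x, y)).1)

theorem wa_P2_i0 (w : autGroup (wreathR SX.R SX.i0 SY.R)) :
    (P w).val.2 SX.i0 = SX.i0 := by
  obtain ⟨x⟩ := wa_nonemptyX SX
  have h := wa_memX (P w) x x
  rw [(SX.ident x x).mpr rfl] at h
  rw [← h]
  exact (SX.ident _ _).mpr rfl

include hP

/-- key computation on same-fiber pairs -/
theorem wa_keyC (w : autGroup (wreathR SX.R SX.i0 SY.R)) (x : X) (y y' : Y) :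
    w.val.2 (Sum.inr (SY.R y y')) =
      Sum.inr (SY.R (w.val.1 (x, y)).2 (w.val.1 (x, y')).2) := by
  have h := wa_mem w (x, y) (x, y')
  have hx : SX.R x x = SX.i0 := (SX.ident x x).mpr rfl
  have hg : SX.R (w.val.1 (x, y)).1 (w.val.1 (x, y')).1 = SX.i0 := by
    rw [← hP w x y, ← hP w x y']
    exact (SX.ident _ _).mpr rfl
  simp only [wreathR] at h
  rw [dif_pos hx, dif_pos hg] at h
  exact h.symm

/-- key computation on distinct-fiber pairs -/
theorem wa_inl_eq (w : autGroup (wreathR SX.R SX.i0 SY.R)) (i : {i : IX // i ≠ SX.i0}) :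
    ∃ h : (P w).val.2 i.val ≠ SX.i0,
      w.val.2 (Sum.inl i) = Sum.inl ⟨(P w).val.2 i.val, h⟩ := by
  obtain ⟨y⟩ := wa_nonemptyY SY
  obtain ⟨⟨x, x'⟩, hx⟩ := SX.surj i.val
  simp only at hx
  have h := wa_mem w (x, y) (x', y)
  have hne : SX.R x x' ≠ SX.i0 := by rw [hx]; exact i.prop
  have hgval : SX.R (w.val.1 (x, y)).1 (w.val.1 (x', y)).1
      = (P w).val.2 (SX.R x x') := by
    rw [← hP w x y, ← hP w x' y]
    exact wa_memX (P w) x x'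
  have hPne : (P w).val.2 i.val ≠ SX.i0 := by
    intro hcon
    exact i.prop ((P w).val.2.injective (hcon.trans (wa_P2_i0 (P := P) w).symm))
  refine ⟨hPne, ?_⟩
  have hgne : SX.R (w.val.1 (x, y)).1 (w.val.1 (x', y)).1 ≠ SX.i0 := by
    rw [hgval, hx]; exact hPne
  simp only [wreathR] at h
  rw [dif_neg hne, dif_neg hgne] at h
  have hi : (⟨SX.R x x', hne⟩ : {i : IX // i ≠ SX.i0}) = i := Subtype.ext hx
  rw [hi] at h
  rw [← h]
  exact congrArg Sum.inl (Subtype.ext (hgval.trans (by rw [hx])))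

/-- the second component maps inr to inr -/
theorem wa_inr_image (w : autGroup (wreathR SX.R SX.i0 SY.R)) (j : IY) :
    ∃ j', w.val.2 (Sum.inr j) = Sum.inr j' := by
  obtain ⟨x⟩ := wa_nonemptyX SX
  obtain ⟨⟨y, y'⟩, hy⟩ := SY.surj j
  simp only at hy
  exact ⟨_, by rw [← hy]; exact wa_keyC hP w x y y'⟩

/-- the permutation of IY induced by w -/
noncomputable def wa_tau (w : autGroup (wreathR SX.R SX.i0 SY.R)) : Equiv.Perm IY where
  toFun j := Sum.elim (fun _ => SY.i0) id (w.val.2 (Sum.inr j))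
  invFun j := Sum.elim (fun _ => SY.i0) id ((w.val.2)⁻¹ (Sum.inr j))
  left_inv j := by
    obtain ⟨j', h⟩ := wa_inr_image hP w j
    have h2 : (w.val.2)⁻¹ (Sum.inr j') = Sum.inr j := by
      rw [← h]; exact Equiv.symm_apply_apply _ _
    simp only [h, Sum.elim_inr, id_eq, h2]
  right_inv j := by
    obtain ⟨j', h⟩ := wa_inr_image hP w⁻¹ j
    have h' : (w.val.2)⁻¹ (Sum.inr j) = Sum.inr j' := h
    have h2 : w.val.2 (Sum.inr j') = Sum.inr j := by
      rw [← h']; exact Equiv.apply_symm_apply _ _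
    simp only [h', Sum.elim_inr, id_eq, h2]

theorem wa_tau_spec (w : autGroup (wreathR SX.R SX.i0 SY.R)) (j : IY) :
    w.val.2 (Sum.inr j) = Sum.inr (wa_tau hP w j) := by
  obtain ⟨j', h⟩ := wa_inr_image hP w j
  rw [h]
  simp only [wa_tau, Equiv.coe_fn_mk, h, Sum.elim_inr, id_eq]

/-- the permutation of the fiber over x induced by w -/
noncomputable def wa_k (w : autGroup (wreathR SX.R SX.i0 SY.R)) (x : X) : Equiv.Perm Y :=
  Equiv.ofBijective (fun y => (w.val.1 (x, y)).2) (by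
    rw [← Finite.injective_iff_bijective]
    intro y y' h
    have h1 : w.val.1 (x, y) = w.val.1 (x, y') :=
      Prod.ext (by rw [← hP w x y, ← hP w x y']) h
    have h2 := w.val.1.injective h1
    exact congrArg Prod.snd h2)

theorem wa_k_apply (w : autGroup (wreathR SX.R SX.i0 SY.R)) (x : X) (y : Y) :
    wa_k hP w x y = (w.val.1 (x, y)).2 := rfl

theorem wa_k_aut (w : autGroup (wreathR SX.R SX.i0 SY.R)) (x : X) :
    (wa_k hP w x, wa_tau hP w) ∈ autGroup SY.R := by
  intro y y'
  have h := (wa_tau_spec hP w (SY.R y y')).symm.trans (wa_keyC hP w x y y')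
  exact (Sum.inr.inj h).symm

theorem wa_tau_mul (a b : autGroup (wreathR SX.R SX.i0 SY.R)) :
    wa_tau hP (a * b) = wa_tau hP a * wa_tau hP b := by
  ext j
  have h1 := wa_tau_spec hP (a * b) j
  have h2 : (a * b).val.2 (Sum.inr j) = a.val.2 (b.val.2 (Sum.inr j)) := rfl
  rw [h2, wa_tau_spec hP b, wa_tau_spec hP a] at h1
  exact (Sum.inr.inj h1).symm

theorem wa_k_mul (a b : autGroup (wreathR SX.R SX.i0 SY.R)) (x : X) :
    wa_k hP (a * b) x = wa_k hP a ((P b).val.1 x) * wa_k hP b x := by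
  ext y
  have hb : b.val.1 (x, y) = ((P b).val.1 x, wa_k hP b x y) :=
    Prod.ext (hP b x y).symm rfl
  have h1 : (a * b).val.1 (x, y) = a.val.1 (b.val.1 (x, y)) := rfl
  rw [Equiv.Perm.mul_apply, wa_k_apply, wa_k_apply, wa_k_apply, h1, hb]

/-- the semidirect-product action: permutation of coordinates -/
def wa_phi (SX : AssocScheme X IX) (SY : AssocScheme Y IY) :
    autGroup SX.R →* MulAut (X → autGroup SY.R) where
  toFun g := MulEquiv.arrowCongr (g.val.1 : X ≃ X) (MulEquiv.refl (autGroup SY.R))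
  map_one' := MulEquiv.ext fun f => funext fun x => rfl
  map_mul' a b := MulEquiv.ext fun f => funext fun x => rfl

theorem wa_phi_apply (g : autGroup SX.R) (f : X → autGroup SY.R) (x : X) :
    wa_phi SX SY g f x = f ((g.val.1)⁻¹ x) := rfl

end WreathAux

/-- The kernel `K` of `P : Aut(X ⋏ Y) → Aut(X)` is the disjoint union, over
permutations `τ` of `I_Y` realized by `Aut(Y)`, of the products
`∏_{x ∈ X} Aut(Y_x)_τ`: an element of `Aut(X ⋏ Y)` lies in `K` iff it fixes
every fiber, acts on the fiber `Y_x` by an automorphism `k_x` of `Y`, with all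
`k_x` inducing one common permutation `τ` of `I_Y`, and its index-part is
`id ⋏ τ`. Consequently there is an injective group homomorphism
`Aut(X ⋏ Y) ↪ Aut(Y) ≀_X Aut(X)`. -/
theorem wreath_aut_kernel {X Y IX IY : Type*}
    [Fintype X] [Fintype Y] [Fintype IX] [Fintype IY]
    [DecidableEq X] [DecidableEq Y] [DecidableEq IX] [DecidableEq IY]
    (SX : AssocScheme X IX) (SY : AssocScheme Y IY)
    (P : autGroup (wreathR SX.R SX.i0 SY.R) →* autGroup SX.R)
    (hP : ∀ w : autGroup (wreathR SX.R SX.i0 SY.R), ∀ x : X, ∀ y : Y,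
      (P w : Equiv.Perm X × Equiv.Perm IX).1 x =
        ((w : Equiv.Perm (X × Y) × Equiv.Perm ({i : IX // i ≠ SX.i0} ⊕ IY)).1 (x, y)).1) :
    (∀ w : autGroup (wreathR SX.R SX.i0 SY.R),
      w ∈ P.ker ↔
        ∃ τ : Equiv.Perm IY, ∃ k : X → Equiv.Perm Y,
          (∀ x : X, ∀ y : Y,
            (w : Equiv.Perm (X × Y) × Equiv.Perm ({i : IX // i ≠ SX.i0} ⊕ IY)).1 (x, y) =
              (x, k x y)) ∧
          (∀ x : X, (k x, τ) ∈ autGroup SY.R) ∧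
          (∀ i : {i : IX // i ≠ SX.i0},
            (w : Equiv.Perm (X × Y) × Equiv.Perm ({i : IX // i ≠ SX.i0} ⊕ IY)).2
              (Sum.inl i) = Sum.inl i) ∧
          (∀ j : IY,
            (w : Equiv.Perm (X × Y) × Equiv.Perm ({i : IX // i ≠ SX.i0} ⊕ IY)).2
              (Sum.inr j) = Sum.inr (τ j))) ∧
    ∃ φ : autGroup SX.R →* MulAut (X → autGroup SY.R),
      ∃ ι : autGroup (wreathR SX.R SX.i0 SY.R) →*
          (X → autGroup SY.R) ⋊[φ] autGroup SX.R,
        Function.Injective ι := by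
  constructor
  · -- kernel characterization
    intro w
    constructor
    · intro hw
      have hw1 : P w = 1 := hw
      refine ⟨wa_tau hP w, wa_k hP w, ?_, wa_k_aut hP w, ?_, wa_tau_spec hP w⟩
      · intro x y
        refine Prod.ext ?_ rfl
        rw [← hP w x y, hw1]
        rfl
      · intro i
        obtain ⟨h, heq⟩ := wa_inl_eq hP w i
        rw [heq]
        refine congrArg Sum.inl (Subtype.ext ?_)
        show (P w).val.2 i.val = i.val
        rw [hw1]
        rfl
    · rintro ⟨τ, k, h1, h2, h3, h4⟩
      have hY : Nonempty Y := wa_nonemptyY SY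
      obtain ⟨y0⟩ := hY
      have hfst : ∀ x : X, (P w).val.1 x = x := by
        intro x
        rw [hP w x y0, h1 x y0]
      have hsnd : ∀ i : IX, (P w).val.2 i = i := by
        intro i
        obtain ⟨⟨x, x'⟩, hx⟩ := SX.surj i
        simp only at hx
        have h := wa_memX (P w) x x'
        rw [hfst x, hfst x'] at h
        rw [← hx, ← h]
      show P w = 1
      refine Subtype.ext (Prod.ext ?_ ?_)
      · exact Equiv.ext hfst
      · exact Equiv.ext hsnd
  · -- embedding into the wreath product
    refine ⟨wa_phi SX SY, ?_⟩
    set F : autGroup (wreathR SX.R SX.i0 SY.R) →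
        (X → autGroup SY.R) ⋊[wa_phi SX SY] autGroup SX.R :=
      fun w => ⟨fun x => ⟨(wa_k hP w ((P w).val.1⁻¹ x), wa_tau hP w), wa_k_aut hP w _⟩, P w⟩
      with hF
    have hmul : ∀ a b, F (a * b) = F a * F b := by
      intro a b
      refine SemidirectProduct.ext ?_ ?_
      · show (fun x => (⟨(wa_k hP (a * b) ((P (a * b)).val.1⁻¹ x), wa_tau hP (a * b)),
            wa_k_aut hP (a * b) _⟩ : autGroup SY.R)) = (F a * F b).left
        rw [SemidirectProduct.mul_left]
        funext x
        refine Subtype.ext (Prod.ext ?_ (wa_tau_mul hP a b))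
        show wa_k hP (a * b) ((P (a * b)).val.1⁻¹ x)
          = wa_k hP a ((P a).val.1⁻¹ x) * wa_k hP b ((P b).val.1⁻¹ ((P a).val.1⁻¹ x))
        have hg : (P (a * b)).val.1⁻¹ x = (P b).val.1⁻¹ ((P a).val.1⁻¹ x) := by
          rw [_root_.map_mul]
          rfl
        rw [hg, wa_k_mul hP a b]
        congr 2
        simp
      · show P (a * b) = (F a * F b).right
        rw [SemidirectProduct.mul_right]
        exact _root_.map_mul P a b
    refine ⟨MonoidHom.mk' F hmul, ?_⟩
    rw [injective_iff_map_eq_one]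
    intro a ha
    have hright : P a = 1 := congrArg SemidirectProduct.right ha
    have hleft := congrArg SemidirectProduct.left ha
    have hg1 : ∀ x : X, (P a).val.1 x = x := by intro x; rw [hright]; rfl
    have hgi : ∀ x : X, (P a).val.1⁻¹ x = x := by
      intro x
      rw [hright]; rfl
    have hx : ∀ x : X, ((wa_k hP a ((P a).val.1⁻¹ x), wa_tau hP a) :
        Equiv.Perm Y × Equiv.Perm IY) = 1 := by
      intro x
      have := congrFun hleft x
      exact congrArg Subtype.val this
    have hk : ∀ x : X, wa_k hP a x = 1 := by
      intro x
      have := congrArg Prod.fst (hx x)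
      rwa [hgi x] at this
    have htau : wa_tau hP a = 1 := by
      obtain ⟨x0⟩ := wa_nonemptyX SX
      exact congrArg Prod.snd (hx x0)
    refine Subtype.ext (Prod.ext ?_ ?_)
    · refine Equiv.ext ?_
      rintro ⟨x, y⟩
      have : a.val.1 (x, y) = ((P a).val.1 x, wa_k hP a x y) :=
        Prod.ext (hP a x y).symm rfl
      rw [this, hg1 x, hk x]
      rfl
    · refine Equiv.ext ?_
      rintro (i | j)
      · obtain ⟨h, heq⟩ := wa_inl_eq hP a i
        rw [heq]
        refine congrArg Sum.inl (Subtype.ext ?_)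
        show (P a).val.2 i.val = i.val
        rw [hright]
        rfl
      · rw [wa_tau_spec hP a j, htau]
        rfl
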